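/- arXiv:1302.3709 — 2 statements merged into one kernel-verified Lean document; each statement's English description precedes it below -/
import Mathlib

section
/- Let {S₁, S₂, S₃, S₄, S₅} be a complete set of Pauli classes in dimension d = 4 (n = 2 qubits). Then there exists a maximal commuting Pauli class S such that every member of S is equal up to phase to a member of S₁ ∪ S₂ ∪ S₃ and S is not equal up to phase (as a set of operators) to any of S₁, S₂, S₃; moreover S is unique: any two maximal commuting Pauli classes with these properties contain the same operators up to phase. -/
open Matrix

noncomputable section

/-- Matrices on the Hilbert space of `n` qubits, with rows and columns indexed by
bit strings `Fin n → Fin 2`. -/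
abbrev QMat (n : ℕ) := Matrix (Fin n → Fin 2) (Fin n → Fin 2) ℂ

/-- The single-qubit identity. -/
def pI : Matrix (Fin 2) (Fin 2) ℂ := 1

/-- The single-qubit Pauli X. -/
def pX : Matrix (Fin 2) (Fin 2) ℂ := !![0, 1; 1, 0]

/-- The single-qubit Pauli Y. -/
def pY : Matrix (Fin 2) (Fin 2) ℂ := !![0, -Complex.I; Complex.I, 0]

/-- The single-qubit Pauli Z. -/
def pZ : Matrix (Fin 2) (Fin 2) ℂ := !![1, 0; 0, -1]

/-- The `n`-fold Kronecker product `W 0 ⊗ ⋯ ⊗ W (n-1)`, realized on indices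
`Fin n → Fin 2`. -/
def kron (n : ℕ) (W : Fin n → Matrix (Fin 2) (Fin 2) ℂ) : QMat n :=
  fun v w => ∏ j, W j (v j) (w j)

/-- `M` is an `n`-qubit Pauli operator: an `n`-fold Kronecker product of matrices
from `{I₂, X, Y, Z}`. -/
def IsPauliOp (n : ℕ) (M : QMat n) : Prop :=
  ∃ W : Fin n → Matrix (Fin 2) (Fin 2) ℂ,
    (∀ j, W j = pI ∨ W j = pX ∨ W j = pY ∨ W j = pZ) ∧ M = kron n W

/-- Two matrices are equal up to phase if one is a nonzero scalar multiple of the other. -/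
def PhaseEq {m : Type*} (A B : Matrix m m ℂ) : Prop := ∃ c : ℂ, c ≠ 0 ∧ A = c • B

/-- A maximal commuting Pauli class in dimension `d = 2 ^ n`: a set of `d - 1`
pairwise commuting non-identity `n`-qubit Pauli operators, pairwise distinct up to phase. -/
def IsMaxClass (n : ℕ) (C : Set (QMat n)) : Prop :=
  C.Finite ∧ C.ncard = 2 ^ n - 1 ∧
  (∀ U ∈ C, IsPauliOp n U ∧ U ≠ 1) ∧
  (∀ U ∈ C, ∀ V ∈ C, U * V = V * U) ∧
  (∀ U ∈ C, ∀ V ∈ C, U ≠ V → ¬ PhaseEq U V)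

/-- Two classes are disjoint if no member of one is equal up to phase to a member of the other. -/
def ClassDisjoint {n : ℕ} (C D : Set (QMat n)) : Prop :=
  ∀ U ∈ C, ∀ V ∈ D, ¬ PhaseEq U V

/-- Two classes are equal up to phase (as sets of operators). -/
def ClassPhaseEq {n : ℕ} (C D : Set (QMat n)) : Prop :=
  (∀ U ∈ C, ∃ V ∈ D, PhaseEq U V) ∧ (∀ V ∈ D, ∃ U ∈ C, PhaseEq U V)

/-- The standard Hermitian inner product on `ι → ℂ` (conjugate-linear in the first slot). -/
def cinner {ι : Type*} [Fintype ι] (x y : ι → ℂ) : ℂ :=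
  ∑ k, (starRingEnd ℂ) (x k) * y k

/-!
Modulo phases, two-qubit Pauli operators are the vectors of the symplectic space `𝔽₂⁴`: `pauliOp p`
and `pauliOp q` commute iff `symp p q = 0`, and Pauli operators equal up to phase are equal. A
maximal commuting class is thus a totally isotropic line of `PG(3, 2)`, and a complete set of
classes is a spread of five such lines `L₀, …, L₄`.

An isotropic line inside `L₀ ∪ L₁ ∪ L₂` other than the `Lᵢ` meets each `Lᵢ` in one point, so it is
`{a, b, a + b}` with `a ∈ L₀`, `b ∈ L₁`, `a + b ∈ L₂` and `symp a b = 0`. Splitting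
`𝔽₂⁴ = ⟨L₀⟩ ⊕ ⟨L₁⟩`, `x = π₀ x + π₁ x`, these lines correspond to the points `x ∈ L₂` at which the
quadratic form `Q x = symp (π₀ x) (π₁ x)` vanishes. The polarisation of `Q` is `symp`, so `Q` is
additive on the isotropic line `L₂` and vanishes at one or at all three of its points. In the
second case, the zero of `Q` on a fourth line `L₃` shares its `L₀`-component with a point of `L₂`,
and that component is then orthogonal to the whole space.
-/

/-! ### Totally isotropic lines of `𝔽₂⁴` -/

/-- Symplectic coordinates `((x₀, z₀), (x₁, z₁))` of a two-qubit Pauli operator modulo phases. -/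
abbrev SympVec := (ZMod 2 × ZMod 2) × (ZMod 2 × ZMod 2)

def symp₁ (a b : ZMod 2 × ZMod 2) : ZMod 2 := a.1 * b.2 + a.2 * b.1

def symp (p q : SympVec) : ZMod 2 := symp₁ p.1 q.1 + symp₁ p.2 q.2

theorem symp_comm (p q : SympVec) : symp p q = symp q p := by
  simp only [symp, symp₁]; ring

theorem symp_add_left (p q r : SympVec) : symp (p + q) r = symp p r + symp q r := by
  simp only [symp, symp₁, Prod.fst_add, Prod.snd_add]; ring

theorem symp_add_right (p q r : SympVec) : symp p (q + r) = symp p q + symp p r := by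
  simp only [symp, symp₁, Prod.fst_add, Prod.snd_add]; ring

@[simp] theorem symp_zero_left (q : SympVec) : symp 0 q = 0 := by simp [symp, symp₁]

@[simp] theorem symp_zero_right (p : SympVec) : symp p 0 = 0 := by simp [symp, symp₁]

@[simp] theorem symp_self : ∀ p : SympVec, symp p p = 0 := by decide

theorem eq_zero_of_forall_symp_eq_zero : ∀ p : SympVec, (∀ q, symp p q = 0) → p = 0 := by
  decide

set_option synthInstance.maxSize 1000 in
/-- A totally isotropic subspace of the 4-dimensional symplectic space has dimension at most 2. -/
theorem eq_add_of_symp_eq_zero : ∀ u v w : SympVec, u ≠ 0 → v ≠ 0 → w ≠ 0 → u ≠ v → w ≠ u →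
    w ≠ v → symp u v = 0 → symp u w = 0 → symp v w = 0 → w = u + v := by
  decide

/-- The three points of a totally isotropic line of `PG(3, 2)`, i.e. the nonzero vectors of a
Lagrangian plane. -/
def IsIsotropicLine (L : Set SympVec) : Prop :=
  L.ncard = 3 ∧ 0 ∉ L ∧ ∀ u ∈ L, ∀ v ∈ L, symp u v = 0

theorem isIsotropicLine_insert {p q : SympVec} (hp : p ≠ 0) (hq : q ≠ 0) (hpq : p ≠ q)
    (h : symp p q = 0) : IsIsotropicLine {p, q, p + q} := by
  have hpq' : p + q ≠ 0 := fun h0 => hpq (CharTwo.add_eq_zero.mp h0)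
  refine ⟨Set.ncard_eq_three.mpr ⟨p, q, p + q, hpq, ?_, ?_, rfl⟩, ?_, ?_⟩
  · simpa using hq
  · simpa using hp
  · simp [hp.symm, hq.symm, hpq'.symm]
  · simp only [Set.mem_insert_iff, Set.mem_singleton_iff]
    rintro u (hu | hu | hu) v (hv | hv | hv) <;> rw [hu, hv] <;>
      simp [symp_add_left, symp_add_right, h, symp_comm q p]

namespace IsIsotropicLine

variable {L M : Set SympVec} {p q : SympVec}

theorem ne_zero (hL : IsIsotropicLine L) (hp : p ∈ L) : p ≠ 0 :=
  fun h => hL.2.1 (h ▸ hp)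

theorem symp_eq_zero (hL : IsIsotropicLine L) (hp : p ∈ L) (hq : q ∈ L) : symp p q = 0 :=
  hL.2.2 p hp q hq

theorem eq_insert (hL : IsIsotropicLine L) (hp : p ∈ L) (hq : q ∈ L) (hpq : p ≠ q) :
    L = {p, q, p + q} := by
  have hlt : ({p, q} : Set SympVec).ncard < L.ncard := by
    rw [hL.1]; exact (Set.ncard_insert_le _ _).trans_lt (by simp)
  obtain ⟨w, hw, hwpq⟩ := Set.exists_mem_notMem_of_ncard_lt_ncard hlt
  simp only [Set.mem_insert_iff, Set.mem_singleton_iff, not_or] at hwpq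
  have hsum : w = p + q := eq_add_of_symp_eq_zero p q w (hL.ne_zero hp) (hL.ne_zero hq)
    (hL.ne_zero hw) hpq hwpq.1 hwpq.2 (hL.symp_eq_zero hp hq) (hL.symp_eq_zero hp hw)
    (hL.symp_eq_zero hq hw)
  have hsub : {p, q, p + q} ⊆ L := by
    simp only [Set.insert_subset_iff, Set.singleton_subset_iff]; exact ⟨hp, hq, hsum ▸ hw⟩
  refine (Set.eq_of_subset_of_ncard_le hsub ?_).symm
  rw [hL.1, (isIsotropicLine_insert (hL.ne_zero hp) (hL.ne_zero hq) hpq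
    (hL.symp_eq_zero hp hq)).1]

theorem exists_eq_insert (hL : IsIsotropicLine L) : ∃ p q, p ≠ q ∧ L = {p, q, p + q} := by
  obtain ⟨p, q, r, hpq, -, -, hL'⟩ := Set.ncard_eq_three.mp hL.1
  exact ⟨p, q, hpq, hL.eq_insert (by simp [hL']) (by simp [hL']) hpq⟩

theorem add_mem (hL : IsIsotropicLine L) (hp : p ∈ L) (hq : q ∈ L) (hpq : p ≠ q) :
    p + q ∈ L := by
  rw [hL.eq_insert hp hq hpq]; simp

theorem add_mem_insert_zero (hL : IsIsotropicLine L) (hp : p ∈ insert 0 L)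
    (hq : q ∈ insert 0 L) : p + q ∈ insert 0 L := by
  obtain rfl | hp := hp
  · simpa using hq
  obtain rfl | hq := hq
  · simpa using Or.inr hp
  by_cases hpq : p = q
  · rw [hpq, CharTwo.add_self_eq_zero]; exact Set.mem_insert _ _
  · exact Or.inr (hL.add_mem hp hq hpq)

theorem symp_eq_zero_of_mem_insert_zero (hL : IsIsotropicLine L) (hp : p ∈ insert 0 L)
    (hq : q ∈ insert 0 L) : symp p q = 0 := by
  obtain rfl | hp := hp
  · simp
  obtain rfl | hq := hq
  · simp
  · exact hL.symp_eq_zero hp hq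

theorem ncard_insert_zero (hL : IsIsotropicLine L) : (insert 0 L).ncard = 4 := by
  rw [Set.ncard_insert_of_notMem hL.2.1, hL.1]

theorem notMem_insert_zero (hL : IsIsotropicLine L) (h : Disjoint L M) (hp : p ∈ L) :
    p ∉ insert 0 M := by
  rintro (rfl | hpM)
  · exact hL.2.1 hp
  · exact Set.disjoint_left.mp h hp hpM

theorem ncard_inter_le_one (hL : IsIsotropicLine L) (hM : IsIsotropicLine M) (h : L ≠ M) :
    (L ∩ M).ncard ≤ 1 := by
  refine (Set.ncard_le_one (Set.toFinite _)).mpr fun p hp q hq => ?_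
  by_contra hpq
  exact h ((hL.eq_insert hp.1 hq.1 hpq).trans (hM.eq_insert hp.2 hq.2 hpq).symm)

end IsIsotropicLine

/-! ### Splitting along two disjoint lines -/

theorem eq_and_eq_of_add_eq_add {L₀ L₁ : Set SympVec} (h₀ : IsIsotropicLine L₀)
    (h₁ : IsIsotropicLine L₁) (h : Disjoint L₀ L₁) {a a' b b' : SympVec} (ha : a ∈ insert 0 L₀)
    (ha' : a' ∈ insert 0 L₀) (hb : b ∈ insert 0 L₁) (hb' : b' ∈ insert 0 L₁)
    (hab : a + b = a' + b') : a = a' ∧ b = b' := by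
  have hsum : a + a' = b + b' := by
    linear_combination hab + (a' - b) * CharTwo.two_eq_zero (R := SympVec)
  have h0 : a + a' = 0 := by
    by_contra hne
    have hmem₁ : a + a' ∈ insert 0 L₁ := hsum ▸ h₁.add_mem_insert_zero hb hb'
    exact Set.disjoint_left.mp h ((h₀.add_mem_insert_zero ha ha').resolve_left hne)
      (hmem₁.resolve_left hne)
  exact ⟨CharTwo.add_eq_zero.mp h0, CharTwo.add_eq_zero.mp (hsum ▸ h0)⟩

/-- `π₀, π₁` are the projections of `SympVec = ⟨L₀⟩ ⊕ ⟨L₁⟩`, where `⟨L⟩ = insert 0 L` is the plane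
spanned by the line `L`. -/
structure IsSplitting (L₀ L₁ : Set SympVec) (π₀ π₁ : SympVec → SympVec) : Prop where
  isIsotropicLine_left : IsIsotropicLine L₀
  isIsotropicLine_right : IsIsotropicLine L₁
  disjoint : Disjoint L₀ L₁
  proj_left_mem : ∀ v, π₀ v ∈ insert 0 L₀
  proj_right_mem : ∀ v, π₁ v ∈ insert 0 L₁
  proj_add_proj : ∀ v, π₀ v + π₁ v = v

theorem exists_isSplitting {L₀ L₁ : Set SympVec} (h₀ : IsIsotropicLine L₀)
    (h₁ : IsIsotropicLine L₁) (h : Disjoint L₀ L₁) : ∃ π₀ π₁, IsSplitting L₀ L₁ π₀ π₁ := by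
  let f : ↥(insert 0 L₀) × ↥(insert 0 L₁) → SympVec := fun x => x.1 + x.2
  have hf : Function.Bijective f := by
    refine Function.Injective.bijective_of_nat_card_le (fun x y hxy => ?_) ?_
    · obtain ⟨h1, h2⟩ := eq_and_eq_of_add_eq_add h₀ h₁ h x.1.2 y.1.2 x.2.2 y.2.2 hxy
      exact Prod.ext (Subtype.ext h1) (Subtype.ext h2)
    · rw [Nat.card_eq_fintype_card (α := SympVec), Nat.card_prod, Nat.card_coe_set_eq,
        Nat.card_coe_set_eq, h₀.ncard_insert_zero, h₁.ncard_insert_zero]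
      rfl
  choose g hg using hf.2
  exact ⟨fun v => (g v).1, fun v => (g v).2, h₀, h₁, h, fun v => (g v).1.2, fun v => (g v).2.2,
    hg⟩

def splitForm (π₀ π₁ : SympVec → SympVec) (v : SympVec) : ZMod 2 := symp (π₀ v) (π₁ v)

namespace IsSplitting

variable {L₀ L₁ L₂ L₃ L : Set SympVec} {π₀ π₁ : SympVec → SympVec}

theorem symm (hπ : IsSplitting L₀ L₁ π₀ π₁) : IsSplitting L₁ L₀ π₁ π₀ :=
  ⟨hπ.2, hπ.1, hπ.3.symm, hπ.5, hπ.4, fun v => by rw [add_comm, hπ.proj_add_proj]⟩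

theorem proj_add_eq (hπ : IsSplitting L₀ L₁ π₀ π₁) {a b : SympVec} (ha : a ∈ insert 0 L₀)
    (hb : b ∈ insert 0 L₁) : π₀ (a + b) = a ∧ π₁ (a + b) = b :=
  eq_and_eq_of_add_eq_add hπ.1 hπ.2 hπ.3 (hπ.proj_left_mem _) ha (hπ.proj_right_mem _) hb
    (hπ.proj_add_proj _)

theorem map_add (hπ : IsSplitting L₀ L₁ π₀ π₁) (x y : SympVec) :
    π₀ (x + y) = π₀ x + π₀ y ∧ π₁ (x + y) = π₁ x + π₁ y := by
  have h := hπ.proj_add_eq (hπ.1.add_mem_insert_zero (hπ.proj_left_mem x) (hπ.proj_left_mem y))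
    (hπ.2.add_mem_insert_zero (hπ.proj_right_mem x) (hπ.proj_right_mem y))
  rwa [add_add_add_comm, hπ.proj_add_proj, hπ.proj_add_proj] at h

theorem proj_left_mem_of_notMem (hπ : IsSplitting L₀ L₁ π₀ π₁) {v : SympVec}
    (hv : v ∉ insert 0 L₁) : π₀ v ∈ L₀ := by
  refine (hπ.proj_left_mem v).resolve_left fun h => hv ?_
  rw [← hπ.proj_add_proj v, h, zero_add]
  exact hπ.proj_right_mem v

theorem splitForm_add (hπ : IsSplitting L₀ L₁ π₀ π₁) (x y : SympVec) :
    splitForm π₀ π₁ (x + y) = splitForm π₀ π₁ x + splitForm π₀ π₁ y + symp x y := by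
  have hiso₀ := hπ.1.symp_eq_zero_of_mem_insert_zero (hπ.proj_left_mem x) (hπ.proj_left_mem y)
  have hiso₁ := hπ.2.symp_eq_zero_of_mem_insert_zero (hπ.proj_right_mem x) (hπ.proj_right_mem y)
  have hxy : symp x y = symp (π₀ x) (π₁ y) + symp (π₀ y) (π₁ x) := by
    conv_lhs => rw [← hπ.proj_add_proj x, ← hπ.proj_add_proj y]
    rw [symp_add_left, symp_add_right, symp_add_right, hiso₀, hiso₁, symp_comm (π₁ x)]
    ring
  simp only [splitForm, (hπ.map_add x y).1, (hπ.map_add x y).2, symp_add_left, symp_add_right,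
    hxy]
  ring

theorem exists_splitForm_eq_zero (hπ : IsSplitting L₀ L₁ π₀ π₁) (hL : IsIsotropicLine L) :
    ∃ x ∈ L, splitForm π₀ π₁ x = 0 := by
  obtain ⟨p, q, -, rfl⟩ := hL.exists_eq_insert
  have hpq : splitForm π₀ π₁ (p + q) = splitForm π₀ π₁ p + splitForm π₀ π₁ q := by
    rw [hπ.splitForm_add, hL.symp_eq_zero (by simp) (by simp), add_zero]
  rcases (by decide : ∀ a b : ZMod 2, a = 0 ∨ b = 0 ∨ a + b = 0)
    (splitForm π₀ π₁ p) (splitForm π₀ π₁ q) with h | h | h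
  · exact ⟨p, by simp, h⟩
  · exact ⟨q, by simp, h⟩
  · exact ⟨p + q, by simp, hpq.trans h⟩

/-- If `splitForm` also vanished at `z`, the common `L₀`-component of `y` and `z` would be
orthogonal to both planes, hence zero. -/
theorem splitForm_ne_zero_of_proj_left_eq (hπ : IsSplitting L₀ L₁ π₀ π₁) {y z : SympVec}
    (hy₀ : y ∉ insert 0 L₀) (hy₁ : y ∉ insert 0 L₁) (hz : z ∉ insert 0 L₀) (hyz : y ≠ z)
    (h : π₀ y = π₀ z) (hQy : splitForm π₀ π₁ y = 0) : splitForm π₀ π₁ z ≠ 0 := by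
  intro hQz
  rw [splitForm, ← h] at hQz
  have hy : π₁ y ∈ L₁ := hπ.symm.proj_left_mem_of_notMem hy₀
  have hz' : π₁ z ∈ L₁ := hπ.symm.proj_left_mem_of_notMem hz
  have hne : π₁ y ≠ π₁ z := fun h' =>
    hyz (by rw [← hπ.proj_add_proj y, h, h', hπ.proj_add_proj])
  have hL₁ : ∀ b ∈ insert 0 L₁, symp (π₀ y) b = 0 := by
    rw [hπ.2.eq_insert hy hz' hne]
    rintro b (hb | hb | hb | hb) <;> rw [hb] <;> simp_all [splitForm, symp_add_right]
  have h0 : π₀ y = 0 := eq_zero_of_forall_symp_eq_zero _ fun v => by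
    rw [← hπ.proj_add_proj v, symp_add_right, hL₁ _ (hπ.proj_right_mem v), add_zero,
      hπ.1.symp_eq_zero_of_mem_insert_zero (hπ.proj_left_mem y) (hπ.proj_left_mem v)]
  exact hπ.1.ne_zero (hπ.proj_left_mem_of_notMem hy₁) h0

theorem image_proj_left (hπ : IsSplitting L₀ L₁ π₀ π₁) (hL : IsIsotropicLine L)
    (h₁ : Disjoint L L₁) : π₀ '' L = L₀ := by
  have hmaps : Set.MapsTo π₀ L L₀ := fun x hx =>
    hπ.proj_left_mem_of_notMem (hL.notMem_insert_zero h₁ hx)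
  have hinj : Set.InjOn π₀ L := by
    intro x hx y hy hxy
    by_contra hne
    have hsum := hL.add_mem hx hy hne
    have h0 : π₀ (x + y) = 0 := by rw [(hπ.map_add x y).1, hxy, CharTwo.add_self_eq_zero]
    apply hL.notMem_insert_zero h₁ hsum
    rw [← hπ.proj_add_proj (x + y), h0, zero_add]
    exact hπ.proj_right_mem _
  refine Set.eq_of_subset_of_ncard_le hmaps.image_subset ?_
  rw [hinj.ncard_image, hL.1, hπ.1.1]

theorem existsUnique_splitForm_eq_zero (hπ : IsSplitting L₀ L₁ π₀ π₁) (h₂ : IsIsotropicLine L₂)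
    (h₃ : IsIsotropicLine L₃) (h₂₀ : Disjoint L₂ L₀) (h₂₁ : Disjoint L₂ L₁)
    (h₃₀ : Disjoint L₃ L₀) (h₃₁ : Disjoint L₃ L₁) (h₂₃ : Disjoint L₂ L₃) :
    ∃! x, x ∈ L₂ ∧ splitForm π₀ π₁ x = 0 := by
  obtain ⟨x, hx, hQx⟩ := hπ.exists_splitForm_eq_zero h₂
  refine ⟨x, ⟨hx, hQx⟩, fun x' ⟨hx', hQx'⟩ => ?_⟩
  by_contra hne
  have hall : ∀ y ∈ L₂, splitForm π₀ π₁ y = 0 := by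
    rw [h₂.eq_insert hx' hx hne]
    rintro y (hy | hy | hy) <;> rw [hy] <;>
      simp [hπ.splitForm_add, hQx, hQx', h₂.symp_eq_zero hx' hx]
  obtain ⟨z, hz, hQz⟩ := hπ.exists_splitForm_eq_zero h₃
  obtain ⟨y, hy, hyz⟩ : π₀ z ∈ π₀ '' L₂ := by
    rw [hπ.image_proj_left h₂ h₂₁]
    exact hπ.proj_left_mem_of_notMem (h₃.notMem_insert_zero h₃₁ hz)
  exact hπ.splitForm_ne_zero_of_proj_left_eq (h₂.notMem_insert_zero h₂₀ hy)
    (h₂.notMem_insert_zero h₂₁ hy) (h₃.notMem_insert_zero h₃₀ hz)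
    (fun e => Set.disjoint_left.mp h₂₃ hy (e ▸ hz)) hyz (hall y hy) hQz

end IsSplitting

/-! ### Transversals of three disjoint lines -/

theorem nonempty_inter_of_subset_union {α : Type*} [Finite α] {s A B C : Set α}
    (hs : 2 < s.ncard) (hsub : s ⊆ A ∪ B ∪ C) (hA : (s ∩ A).ncard ≤ 1) (hB : (s ∩ B).ncard ≤ 1)
    (hC : (s ∩ C).ncard ≤ 1) : (s ∩ A).Nonempty ∧ (s ∩ B).Nonempty ∧ (s ∩ C).Nonempty := by
  have hcover : s ⊆ s ∩ A ∪ s ∩ B ∪ s ∩ C := fun x hx => by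
    rcases hsub hx with (h | h) | h <;> simp [hx, h]
  have := (Set.ncard_le_ncard hcover).trans
    ((Set.ncard_union_le _ _).trans (Nat.add_le_add_right (Set.ncard_union_le _ _) _))
  exact ⟨Set.nonempty_of_ncard_ne_zero (by omega), Set.nonempty_of_ncard_ne_zero (by omega),
    Set.nonempty_of_ncard_ne_zero (by omega)⟩

/-- Such a line `t` meets each `Lᵢ` in exactly one point, see `isTransversal_iff`. -/
def IsTransversal (L₀ L₁ L₂ t : Set SympVec) : Prop :=
  IsIsotropicLine t ∧ t ⊆ L₀ ∪ L₁ ∪ L₂ ∧ t ≠ L₀ ∧ t ≠ L₁ ∧ t ≠ L₂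

section Transversal

variable {L₀ L₁ L₂ L₃ : Set SympVec}

theorem isTransversal_iff (h₀ : IsIsotropicLine L₀) (h₁ : IsIsotropicLine L₁)
    (h₂ : IsIsotropicLine L₂) (h₀₁ : Disjoint L₀ L₁) (h₀₂ : Disjoint L₀ L₂)
    (h₁₂ : Disjoint L₁ L₂) {t : Set SympVec} :
    IsTransversal L₀ L₁ L₂ t ↔
      ∃ a ∈ L₀, ∃ b ∈ L₁, a + b ∈ L₂ ∧ symp a b = 0 ∧ t = {a, b, a + b} := by
  constructor
  · rintro ⟨ht, hsub, hne₀, hne₁, hne₂⟩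
    obtain ⟨⟨a, hat, ha⟩, ⟨b, hbt, hb⟩, ⟨c, hct, hc⟩⟩ :=
      nonempty_inter_of_subset_union (by rw [ht.1]; norm_num) hsub
        (ht.ncard_inter_le_one h₀ hne₀) (ht.ncard_inter_le_one h₁ hne₁)
        (ht.ncard_inter_le_one h₂ hne₂)
    have hab : a ≠ b := fun e => Set.disjoint_left.mp h₀₁ ha (e ▸ hb)
    have hteq := ht.eq_insert hat hbt hab
    have hc' : c = a + b := by
      rw [hteq] at hct
      rcases hct with rfl | rfl | hct
      · exact absurd hc (Set.disjoint_left.mp h₀₂ ha)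
      · exact absurd hc (Set.disjoint_left.mp h₁₂ hb)
      · exact hct
    exact ⟨a, ha, b, hb, hc' ▸ hc, ht.symp_eq_zero hat hbt, hteq⟩
  · rintro ⟨a, ha, b, hb, hab, hsymp, rfl⟩
    have hne : a ≠ b := fun e => Set.disjoint_left.mp h₀₁ ha (e ▸ hb)
    have hat : a ∈ ({a, b, a + b} : Set SympVec) := by simp
    have hbt : b ∈ ({a, b, a + b} : Set SympVec) := by simp
    refine ⟨isIsotropicLine_insert (h₀.ne_zero ha) (h₁.ne_zero hb) hne hsymp, ?_,
      fun e => Set.disjoint_left.mp h₀₁ (e ▸ hbt) hb,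
      fun e => Set.disjoint_left.mp h₀₁ ha (e ▸ hat),
      fun e => Set.disjoint_left.mp h₀₂ ha (e ▸ hat)⟩
    simp only [Set.insert_subset_iff, Set.singleton_subset_iff, Set.mem_union]
    exact ⟨Or.inl (Or.inl ha), Or.inl (Or.inr hb), Or.inr hab⟩

theorem existsUnique_isTransversal (h₀ : IsIsotropicLine L₀) (h₁ : IsIsotropicLine L₁)
    (h₂ : IsIsotropicLine L₂) (h₃ : IsIsotropicLine L₃) (h₀₁ : Disjoint L₀ L₁)
    (h₀₂ : Disjoint L₀ L₂) (h₀₃ : Disjoint L₀ L₃) (h₁₂ : Disjoint L₁ L₂) (h₁₃ : Disjoint L₁ L₃)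
    (h₂₃ : Disjoint L₂ L₃) : ∃! t, IsTransversal L₀ L₁ L₂ t := by
  obtain ⟨π₀, π₁, hπ⟩ := exists_isSplitting h₀ h₁ h₀₁
  obtain ⟨x, ⟨hx, hQx⟩, hxu⟩ :=
    hπ.existsUnique_splitForm_eq_zero h₂ h₃ h₀₂.symm h₁₂.symm h₀₃.symm h₁₃.symm h₂₃
  simp only [isTransversal_iff h₀ h₁ h₂ h₀₁ h₀₂ h₁₂]
  refine ⟨{π₀ x, π₁ x, x},
    ⟨π₀ x, hπ.proj_left_mem_of_notMem (h₂.notMem_insert_zero h₁₂.symm hx),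
      π₁ x, hπ.symm.proj_left_mem_of_notMem (h₂.notMem_insert_zero h₀₂.symm hx),
      by rwa [hπ.proj_add_proj], hQx, by rw [hπ.proj_add_proj]⟩, ?_⟩
  rintro t ⟨a, ha, b, hb, hab, hsymp, rfl⟩
  obtain ⟨ha', hb'⟩ := hπ.proj_add_eq (Set.mem_insert_of_mem _ ha) (Set.mem_insert_of_mem _ hb)
  obtain rfl : a + b = x := hxu _ ⟨hab, by rwa [splitForm, ha', hb']⟩
  rw [ha', hb']

end Transversal

/-! ### Pauli operators and their symplectic coordinates -/

theorem kron_mul (n : ℕ) (W W' : Fin n → Matrix (Fin 2) (Fin 2) ℂ) :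
    kron n W * kron n W' = kron n (fun j => W j * W' j) := by
  ext v w
  simp only [Matrix.mul_apply, kron, ← Finset.prod_mul_distrib]
  rw [Finset.prod_univ_sum]
  simp [Fintype.piFinset_univ]

theorem kron_smul (n : ℕ) (c : Fin n → ℂ) (W : Fin n → Matrix (Fin 2) (Fin 2) ℂ) :
    kron n (fun j => c j • W j) = (∏ j, c j) • kron n W := by
  ext v w
  simp [kron, Finset.prod_mul_distrib]

theorem kron_one (n : ℕ) : kron n (fun _ => 1) = 1 := by
  ext v w
  simp [kron, Matrix.one_apply, Finset.prod_boole, funext_iff]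

theorem trace_kron (n : ℕ) (W : Fin n → Matrix (Fin 2) (Fin 2) ℂ) :
    (kron n W).trace = ∏ j, (W j).trace := by
  simp only [Matrix.trace, Matrix.diag, kron, Finset.prod_univ_sum, Fintype.piFinset_univ]

/-- The single-qubit Pauli operator `X^x Z^z`, up to phase, with symplectic coordinates `(x, z)`. -/
def pauli₁ (a : ZMod 2 × ZMod 2) : Matrix (Fin 2) (Fin 2) ℂ := ![![pI, pZ], ![pX, pY]] a.1 a.2

theorem pauli₁_mem (a : ZMod 2 × ZMod 2) :
    pauli₁ a = pI ∨ pauli₁ a = pX ∨ pauli₁ a = pY ∨ pauli₁ a = pZ := by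
  obtain ⟨x, z⟩ := a
  fin_cases x <;> fin_cases z <;> simp [pauli₁]

theorem exists_pauli₁_eq {W : Matrix (Fin 2) (Fin 2) ℂ}
    (h : W = pI ∨ W = pX ∨ W = pY ∨ W = pZ) : ∃ a, pauli₁ a = W := by
  rcases h with rfl | rfl | rfl | rfl
  exacts [⟨(0, 0), rfl⟩, ⟨(1, 0), rfl⟩, ⟨(1, 1), rfl⟩, ⟨(0, 1), rfl⟩]

theorem pauli₁_mul_self (a : ZMod 2 × ZMod 2) : pauli₁ a * pauli₁ a = 1 := by
  obtain ⟨x, z⟩ := a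
  fin_cases x <;> fin_cases z <;> simp [pauli₁, pI, pX, pY, pZ, Matrix.one_fin_two]

theorem pauli₁_mul_comm (a b : ZMod 2 × ZMod 2) :
    pauli₁ a * pauli₁ b = (if symp₁ a b = 0 then 1 else -1 : ℂ) • (pauli₁ b * pauli₁ a) := by
  obtain ⟨x, z⟩ := a
  obtain ⟨x', z'⟩ := b
  fin_cases x <;> fin_cases z <;> fin_cases x' <;> fin_cases z' <;>
    simp +decide [pauli₁, pI, pX, pY, pZ]

theorem trace_pauli₁_mul (a b : ZMod 2 × ZMod 2) :
    (pauli₁ a * pauli₁ b).trace = if a = b then 2 else 0 := by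
  obtain ⟨x, z⟩ := a
  obtain ⟨x', z'⟩ := b
  fin_cases x <;> fin_cases z <;> fin_cases x' <;> fin_cases z' <;>
    simp +decide [pauli₁, pI, pX, pY, pZ, Matrix.trace_fin_two, one_add_one_eq_two]

def pauliOp (p : SympVec) : QMat 2 := kron 2 ![pauli₁ p.1, pauli₁ p.2]

theorem pauliOp_mul (p q : SympVec) :
    pauliOp p * pauliOp q = kron 2 ![pauli₁ p.1 * pauli₁ q.1, pauli₁ p.2 * pauli₁ q.2] := by
  rw [pauliOp, pauliOp, kron_mul]
  congr 1
  ext j : 1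
  fin_cases j <;> rfl

theorem pauliOp_zero : pauliOp 0 = 1 := by
  rw [← kron_one]
  congr 1

theorem pauliOp_mul_self (p : SympVec) : pauliOp p * pauliOp p = 1 := by
  rw [pauliOp_mul, pauli₁_mul_self, pauli₁_mul_self, ← kron_one]
  congr 1
  ext j : 1
  fin_cases j <;> rfl

theorem trace_pauliOp_mul (p q : SympVec) :
    (pauliOp p * pauliOp q).trace = if p = q then 4 else 0 := by
  rw [pauliOp_mul, trace_kron, Fin.prod_univ_two]
  simp only [Matrix.cons_val_zero, Matrix.cons_val_one, trace_pauli₁_mul, ite_zero_mul_ite_zero,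
    ← Prod.ext_iff]
  norm_num

theorem isPauliOp_iff {U : QMat 2} : IsPauliOp 2 U ↔ U ∈ Set.range pauliOp := by
  constructor
  · rintro ⟨W, hW, rfl⟩
    choose a ha using fun j => exists_pauli₁_eq (hW j)
    refine ⟨(a 0, a 1), congrArg (kron 2) ?_⟩
    ext j : 1
    fin_cases j <;> simp [ha]
  · rintro ⟨p, rfl⟩
    refine ⟨_, fun j => ?_, rfl⟩
    fin_cases j <;> exact pauli₁_mem _

theorem phaseEq_pauliOp_iff {p q : SympVec} : PhaseEq (pauliOp p) (pauliOp q) ↔ p = q := by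
  refine ⟨fun ⟨c, hc, h⟩ => ?_, fun h => ⟨1, one_ne_zero, by rw [h, one_smul]⟩⟩
  have htr := trace_pauliOp_mul p q
  rw [h, Matrix.smul_mul, Matrix.trace_smul, trace_pauliOp_mul, if_pos rfl] at htr
  by_contra hpq
  rw [if_neg hpq, smul_eq_mul, mul_eq_zero] at htr
  exact htr.elim hc (by norm_num)

theorem pauliOp_injective : Function.Injective pauliOp := fun _ _ h =>
  phaseEq_pauliOp_iff.mp ⟨1, one_ne_zero, by rw [h, one_smul]⟩

theorem pauliOp_eq_one_iff {p : SympVec} : pauliOp p = 1 ↔ p = 0 := by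
  rw [← pauliOp_zero, pauliOp_injective.eq_iff]

theorem pauliOp_mul_comm (p q : SympVec) :
    pauliOp p * pauliOp q = ((if symp₁ p.1 q.1 = 0 then 1 else -1 : ℂ) *
      (if symp₁ p.2 q.2 = 0 then 1 else -1)) • (pauliOp q * pauliOp p) := by
  rw [pauliOp_mul, pauliOp_mul, pauli₁_mul_comm p.1, pauli₁_mul_comm p.2]
  convert kron_smul 2
    ![(if symp₁ p.1 q.1 = 0 then 1 else -1 : ℂ), if symp₁ p.2 q.2 = 0 then 1 else -1]
    ![pauli₁ q.1 * pauli₁ p.1, pauli₁ q.2 * pauli₁ p.2] using 2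
  · ext j : 1
    fin_cases j <;> rfl
  · simp [Fin.prod_univ_two]

theorem sign_mul_sign_eq_one_iff (x y : ZMod 2) :
    (if x = 0 then 1 else -1 : ℂ) * (if y = 0 then 1 else -1) = 1 ↔ x = y := by
  obtain rfl | rfl := (by decide : ∀ x : ZMod 2, x = 0 ∨ x = 1) x <;>
  obtain rfl | rfl := (by decide : ∀ x : ZMod 2, x = 0 ∨ x = 1) y <;>
  norm_num

theorem pauliOp_commute_iff {p q : SympVec} :
    pauliOp p * pauliOp q = pauliOp q * pauliOp p ↔ symp p q = 0 := by
  have hne : pauliOp q * pauliOp p ≠ 0 :=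
    left_ne_zero_of_mul_eq_one (b := pauliOp p * pauliOp q) (by
      rw [mul_assoc, ← mul_assoc (pauliOp p), pauliOp_mul_self, one_mul, pauliOp_mul_self])
  conv_lhs => rw [pauliOp_mul_comm]; rhs; rw [← one_smul ℂ (pauliOp q * pauliOp p)]
  rw [(smul_left_injective ℂ hne).eq_iff, sign_mul_sign_eq_one_iff, symp, CharTwo.add_eq_zero]

theorem IsMaxClass.subset_range_pauliOp {C : Set (QMat 2)} (hC : IsMaxClass 2 C) :
    C ⊆ Set.range pauliOp :=
  fun U hU => isPauliOp_iff.mp (hC.2.2.1 U hU).1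

theorem isMaxClass_image_pauliOp_iff {t : Set SympVec} :
    IsMaxClass 2 (pauliOp '' t) ↔ IsIsotropicLine t := by
  simp only [IsMaxClass, IsIsotropicLine, Set.forall_mem_image, (Set.toFinite _).image,
    Set.ncard_image_of_injective _ pauliOp_injective, isPauliOp_iff, Set.mem_range_self,
    ne_eq, pauliOp_eq_one_iff, pauliOp_commute_iff, phaseEq_pauliOp_iff,
    pauliOp_injective.eq_iff, true_and, imp_self, implies_true, and_true]
  exact and_congr_right'
    (and_congr_left' ⟨fun h h0 => h h0 rfl, fun h _ hx hx0 => h (hx0 ▸ hx)⟩)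

theorem classDisjoint_image_pauliOp_iff {s t : Set SympVec} :
    ClassDisjoint (pauliOp '' s) (pauliOp '' t) ↔ Disjoint s t := by
  simp only [ClassDisjoint, Set.forall_mem_image, phaseEq_pauliOp_iff,
    Set.disjoint_iff_forall_ne, ne_eq]

theorem forall_exists_phaseEq_image_pauliOp_iff {s t : Set SympVec} :
    (∀ U ∈ pauliOp '' s, ∃ V ∈ pauliOp '' t, PhaseEq U V) ↔ s ⊆ t := by
  simp only [Set.forall_mem_image, Set.exists_mem_image, phaseEq_pauliOp_iff, exists_eq_right']
  rfl

theorem classPhaseEq_image_pauliOp_iff {s t : Set SympVec} :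
    ClassPhaseEq (pauliOp '' s) (pauliOp '' t) ↔ s = t := by
  simp only [ClassPhaseEq, Set.forall_mem_image, Set.exists_mem_image, phaseEq_pauliOp_iff,
    exists_eq_right', exists_eq_right, Set.Subset.antisymm_iff]
  rfl

theorem forall_fin_five_val_lt_three_iff {P : Fin 5 → Prop} :
    (∀ i : Fin 5, i.val < 3 → P i) ↔ P 0 ∧ P 1 ∧ P 2 := by
  refine ⟨fun h => ⟨h 0 (by decide), h 1 (by decide), h 2 (by decide)⟩, ?_⟩
  rintro ⟨h0, h1, h2⟩ i hi
  fin_cases i <;> simp_all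

/-- Given a complete set of five Pauli classes in dimension `d = 4`,
there is a unique (up to phase) maximal commuting Pauli class `T`, not equal up to
phase to any of `S 0`, `S 1`, `S 2`, all of whose members are equal up to phase to
members of `S 0 ∪ S 1 ∪ S 2`. -/
theorem unique_extra_class_d4 (S : Fin 5 → Set (QMat 2))
    (hmax : ∀ i, IsMaxClass 2 (S i))
    (hdisj : ∀ i j, i ≠ j → ClassDisjoint (S i) (S j)) :
    ∃ T : Set (QMat 2),
      (IsMaxClass 2 T ∧
        (∀ U ∈ T, ∃ V ∈ S 0 ∪ S 1 ∪ S 2, PhaseEq U V) ∧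
        (∀ i : Fin 5, i.val < 3 → ¬ ClassPhaseEq T (S i))) ∧
      ∀ T' : Set (QMat 2),
        (IsMaxClass 2 T' ∧
          (∀ U ∈ T', ∃ V ∈ S 0 ∪ S 1 ∪ S 2, PhaseEq U V) ∧
          (∀ i : Fin 5, i.val < 3 → ¬ ClassPhaseEq T' (S i))) →
        ClassPhaseEq T T' := by
  choose L hL using fun i =>
    Set.subset_range_iff_exists_image_eq.mp (hmax i).subset_range_pauliOp
  obtain rfl : S = fun i => pauliOp '' L i := funext fun i => (hL i).symm
  have hline : ∀ i, IsIsotropicLine (L i) := fun i => isMaxClass_image_pauliOp_iff.mp (hmax i)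
  have hdisj' : ∀ i j, i ≠ j → Disjoint (L i) (L j) :=
    fun i j h => classDisjoint_image_pauliOp_iff.mp (hdisj i j h)
  have hcond : ∀ t, (IsMaxClass 2 (pauliOp '' t) ∧
      (∀ U ∈ pauliOp '' t,
        ∃ V ∈ pauliOp '' L 0 ∪ pauliOp '' L 1 ∪ pauliOp '' L 2, PhaseEq U V) ∧
      ∀ i : Fin 5, i.val < 3 → ¬ ClassPhaseEq (pauliOp '' t) (pauliOp '' L i)) ↔
        IsTransversal (L 0) (L 1) (L 2) t := by
    intro t
    simp only [← Set.image_union, isMaxClass_image_pauliOp_iff,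
      forall_exists_phaseEq_image_pauliOp_iff, classPhaseEq_image_pauliOp_iff, IsTransversal,
      forall_fin_five_val_lt_three_iff, ne_eq]
  obtain ⟨t, ht, huniq⟩ := existsUnique_isTransversal (hline 0) (hline 1) (hline 2) (hline 3)
    (hdisj' 0 1 (by decide)) (hdisj' 0 2 (by decide)) (hdisj' 0 3 (by decide))
    (hdisj' 1 2 (by decide)) (hdisj' 1 3 (by decide)) (hdisj' 2 3 (by decide))
  refine ⟨pauliOp '' t, (hcond t).mpr ht, fun T' hT' => ?_⟩
  obtain ⟨t', rfl⟩ := Set.subset_range_iff_exists_image_eq.mp hT'.1.subset_range_pauliOp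
  rw [classPhaseEq_image_pauliOp_iff, huniq t' ((hcond t').mp hT')]
end
end

section
/- Let B₁ = {(1/2)(1, i, i, −1)ᵀ, (1/2)(1, −i, −i, −1)ᵀ, (1/2)(1, −i, i, 1)ᵀ, (1/2)(1, i, −i, 1)ᵀ}, B₂ = {(1/2)(1, −i, −i, 1)ᵀ, (1/2)(1, −i, i, −1)ᵀ, (1/2)(1, i, −i, −1)ᵀ, (1/2)(1, i, i, 1)ᵀ}, and let B₃ = {e₁, e₂, e₃, e₄} be the standard basis of ℂ⁴. Then B₁, B₂, B₃ are pairwise mutually unbiased orthonormal bases of ℂ⁴, and the set {B₁, B₂, B₃} is strongly unextendible: there exists no unit vector ψ ∈ ℂ⁴ such that |⟨ψ, b⟩| = 1/2 for every b ∈ B₁ ∪ B₂ ∪ B₃. -/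
/-!
Unbiasedness to the standard basis forces `|ψₖ| = 1/2` for every `k`. In suitable signed sums of
the eight conditions `|⟨ψ, b⟩|² = 1/4`, `b ∈ B₁ ∪ B₂`, the diagonal terms cancel, and what is left
says that `ψ₀ψ̄₁` and `ψ₃ψ̄₁` are real while `ψ₀ψ̄₃` is purely imaginary. As `ψ₁ ≠ 0`, the first two
make `ψ₀ψ̄₃` real as well, hence zero, contradicting `|ψ₀| = |ψ₃| = 1/2`.
-/

open Matrix

noncomputable section

/-- The first basis `B₁`. -/
def B1 : Fin 4 → Fin 4 → ℂ :=
  ![(1 / 2 : ℂ) • ![1, Complex.I, Complex.I, -1],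
    (1 / 2 : ℂ) • ![1, -Complex.I, -Complex.I, -1],
    (1 / 2 : ℂ) • ![1, -Complex.I, Complex.I, 1],
    (1 / 2 : ℂ) • ![1, Complex.I, -Complex.I, 1]]

/-- The second basis `B₂`. -/
def B2 : Fin 4 → Fin 4 → ℂ :=
  ![(1 / 2 : ℂ) • ![1, -Complex.I, -Complex.I, 1],
    (1 / 2 : ℂ) • ![1, -Complex.I, Complex.I, -1],
    (1 / 2 : ℂ) • ![1, Complex.I, -Complex.I, -1],
    (1 / 2 : ℂ) • ![1, Complex.I, Complex.I, 1]]

/-- The standard basis `B₃` of `ℂ⁴`. -/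
def B3 : Fin 4 → Fin 4 → ℂ := fun k j => if j = k then 1 else 0

open ComplexConjugate

lemma norm_eq_half_iff_mul_conj {z : ℂ} : ‖z‖ = 1 / 2 ↔ z * conj z = 1 / 4 := by
  rw [Complex.mul_conj, Complex.normSq_eq_norm_sq,
    show (1 / 4 : ℂ) = ((1 / 2 : ℝ) ^ 2 : ℝ) by norm_num, Complex.ofReal_inj,
    sq_eq_sq₀ (norm_nonneg z) (by norm_num)]

/-- `a b̄` and `c b̄` are real, hence so is `a c̄ = (a b̄)(c b̄)‾ / |b|²`; being also purely
imaginary, it vanishes. -/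
lemma eq_zero_or_eq_zero_of_conj_mul_eq {a b c : ℂ} (hb : b ≠ 0)
    (hab : conj b * a = conj a * b) (hcb : conj b * c = conj c * b)
    (hac : conj c * a + conj a * c = 0) : a = 0 ∨ c = 0 := by
  have hb' : conj b * b ≠ 0 := mul_ne_zero ((map_ne_zero _).mpr hb) hb
  have hreal : conj c * a = conj a * c :=
    mul_right_cancel₀ hb' (by linear_combination conj c * b * hab - conj a * b * hcb)
  have hzero : conj c * a = 0 := by linear_combination (hac + hreal) / 2
  rcases mul_eq_zero.mp hzero with h | h
  · exact Or.inr ((map_eq_zero _).mp h)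
  · exact Or.inl h

lemma cinner_B3 (x : Fin 4 → ℂ) (l : Fin 4) : cinner x (B3 l) = conj (x l) := by
  simp [cinner, B3]

lemma B1_orthonormal (k l : Fin 4) : cinner (B1 k) (B1 l) = if k = l then 1 else 0 := by
  fin_cases k <;> fin_cases l <;>
    simp [cinner, B1, Fin.sum_univ_four, Complex.ext_iff] <;> norm_num

lemma B2_orthonormal (k l : Fin 4) : cinner (B2 k) (B2 l) = if k = l then 1 else 0 := by
  fin_cases k <;> fin_cases l <;>
    simp [cinner, B2, Fin.sum_univ_four, Complex.ext_iff] <;> norm_num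

lemma B3_orthonormal (k l : Fin 4) : cinner (B3 k) (B3 l) = if k = l then 1 else 0 := by
  simp [cinner_B3, B3, eq_comm]

lemma B1_B2_unbiased (k l : Fin 4) : ‖cinner (B1 k) (B2 l)‖ = 1 / 2 := by
  rw [norm_eq_half_iff_mul_conj]
  fin_cases k <;> fin_cases l <;>
    simp [cinner, B1, B2, Fin.sum_univ_four, Complex.ext_iff] <;> norm_num

lemma B1_B3_unbiased (k l : Fin 4) : ‖cinner (B1 k) (B3 l)‖ = 1 / 2 := by
  rw [cinner_B3, Complex.norm_conj]
  fin_cases k <;> fin_cases l <;> simp [B1]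

lemma B2_B3_unbiased (k l : Fin 4) : ‖cinner (B2 k) (B3 l)‖ = 1 / 2 := by
  rw [cinner_B3, Complex.norm_conj]
  fin_cases k <;> fin_cases l <;> simp [B2]

lemma relations_of_unbiased_B1_B2 (ψ : Fin 4 → ℂ) (h1 : ∀ k, ‖cinner ψ (B1 k)‖ = 1 / 2)
    (h2 : ∀ k, ‖cinner ψ (B2 k)‖ = 1 / 2) :
    conj (ψ 1) * ψ 0 = conj (ψ 0) * ψ 1 ∧ conj (ψ 1) * ψ 3 = conj (ψ 3) * ψ 1 ∧
      conj (ψ 3) * ψ 0 + conj (ψ 0) * ψ 3 = 0 := by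
  have e1 := fun k => norm_eq_half_iff_mul_conj.mp (h1 k)
  have e2 := fun k => norm_eq_half_iff_mul_conj.mp (h2 k)
  have e10 := e1 0; have e11 := e1 1; have e12 := e1 2; have e13 := e1 3
  have e20 := e2 0; have e21 := e2 1; have e22 := e2 2; have e23 := e2 3
  simp only [cinner, B1, B2, Fin.sum_univ_four, map_add, map_mul, map_one, map_neg, map_div₀,
    map_ofNat, Complex.conj_conj, Complex.conj_I, Pi.smul_apply, smul_eq_mul, cons_val_zero,
    cons_val_one, cons_val_two, cons_val_three, head_cons, tail_cons]
    at e10 e11 e12 e13 e20 e21 e22 e23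
  refine ⟨mul_left_cancel₀ Complex.I_ne_zero ?_, mul_left_cancel₀ Complex.I_ne_zero ?_, ?_⟩
  · linear_combination (1 / 2 : ℂ) * (e10 + e13 + e22 + e23 - e11 - e12 - e20 - e21)
  · linear_combination (1 / 2 : ℂ) * (e11 + e13 + e21 + e23 - e10 - e12 - e20 - e22)
  · linear_combination (1 / 2 : ℂ) * (e12 + e13 + e20 + e23 - e10 - e11 - e21 - e22)

/-- `B₁`, `B₂`, `B₃` are pairwise mutually unbiased orthonormal bases of `ℂ⁴`,
and the set `{B₁, B₂, B₃}` is strongly unextendible: no unit vector `ψ ∈ ℂ⁴` satisfies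
`|⟨ψ, b⟩| = 1/2` for every vector `b` of the three bases. -/
theorem strongly_unextendible_triple_d4 :
    (∀ k l : Fin 4, cinner (B1 k) (B1 l) = if k = l then 1 else 0) ∧
    (∀ k l : Fin 4, cinner (B2 k) (B2 l) = if k = l then 1 else 0) ∧
    (∀ k l : Fin 4, cinner (B3 k) (B3 l) = if k = l then 1 else 0) ∧
    (∀ k l : Fin 4, ‖cinner (B1 k) (B2 l)‖ = 1 / 2) ∧
    (∀ k l : Fin 4, ‖cinner (B1 k) (B3 l)‖ = 1 / 2) ∧
    (∀ k l : Fin 4, ‖cinner (B2 k) (B3 l)‖ = 1 / 2) ∧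
    ¬ ∃ ψ : Fin 4 → ℂ, cinner ψ ψ = 1 ∧
        (∀ k, ‖cinner ψ (B1 k)‖ = 1 / 2) ∧
        (∀ k, ‖cinner ψ (B2 k)‖ = 1 / 2) ∧
        (∀ k, ‖cinner ψ (B3 k)‖ = 1 / 2) := by
  refine ⟨B1_orthonormal, B2_orthonormal, B3_orthonormal, B1_B2_unbiased, B1_B3_unbiased,
    B2_B3_unbiased, ?_⟩
  rintro ⟨ψ, -, h1, h2, h3⟩
  have hψ (k : Fin 4) : ψ k ≠ 0 := by
    intro h
    simpa [cinner_B3, h] using h3 k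
  obtain ⟨h01, h31, h03⟩ := relations_of_unbiased_B1_B2 ψ h1 h2
  rcases eq_zero_or_eq_zero_of_conj_mul_eq (hψ 1) h01 h31 h03 with h | h
  exacts [hψ 0 h, hψ 3 h]
end
end
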